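/- Let μ, ν, z be real numbers with μ > 0 and ν > μ. Then ∫₀¹ x^{ν−μ−1} (1−x)^{μ−1} e^{−z x³} dx = (Γ(μ) Γ(ν−μ) / Γ(ν)) · ₃F₃((ν−μ)/3, (ν−μ+1)/3, (ν−μ+2)/3; ν/3, (ν+1)/3, (ν+2)/3; −z). -/

import Mathlib

open MeasureTheory Set

/-- Pochhammer symbol `(c)_n = c(c+1)⋯(c+n−1)` for a real `c`. -/
noncomputable def poch (c : ℝ) (n : ℕ) : ℝ := ∏ i ∈ Finset.range n, (c + i)

/-- The generalized hypergeometric series `₃F₃(a₁,a₂,a₃;b₁,b₂,b₃;z)`. -/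
noncomputable def hyp3F3 (a₁ a₂ a₃ b₁ b₂ b₃ z : ℝ) : ℝ :=
  ∑' n : ℕ, poch a₁ n * poch a₂ n * poch a₃ n / (poch b₁ n * poch b₂ n * poch b₃ n) *
    z ^ n / n.factorial

/-!
Expand `exp (-(z x³))` in its Taylor series and integrate term by term against the Beta weight
`x^{ν-μ-1} (1-x)^{μ-1}`; the interchange is justified because `|z x³| ≤ |z|` on `(0,1)`.
The `n`-th term is a Beta integral, `(-z)^n/n! · B(ν-μ+3n, μ)`, and
`B(ν-μ+3n, μ) = B(ν-μ, μ) · (ν-μ)_{3n} / (ν)_{3n}`. Gauss' multiplication formula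
`(c)_{3n} = 27^n (c/3)_n ((c+1)/3)_n ((c+2)/3)_n` turns this ratio into the `₃F₃` coefficient.
-/

open scoped Nat

lemma poch_succ (c : ℝ) (n : ℕ) : poch c (n + 1) = poch c n * (c + n) :=
  Finset.prod_range_succ _ _

lemma poch_pos {c : ℝ} (hc : 0 < c) (n : ℕ) : 0 < poch c n :=
  Finset.prod_pos fun _ _ => by positivity

lemma Real.Gamma_add_nat_eq_poch_mul {c : ℝ} (hc : 0 < c) (n : ℕ) :
    Real.Gamma (c + n) = poch c n * Real.Gamma c := by
  induction n with
  | zero => simp [poch]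
  | succ n ih =>
    rw [Nat.cast_succ, ← add_assoc, Real.Gamma_add_one (by positivity), ih, poch_succ]
    ring

lemma poch_three_mul (c : ℝ) (n : ℕ) :
    poch c (3 * n) = 27 ^ n * (poch (c / 3) n * poch ((c + 1) / 3) n * poch ((c + 2) / 3) n) := by
  induction n with
  | zero => simp [poch]
  | succ n ih =>
    rw [show 3 * (n + 1) = 3 * n + 1 + 1 + 1 by ring, poch_succ, poch_succ, poch_succ, ih,
      poch_succ, poch_succ, poch_succ]
    push_cast
    ring

section Beta

variable {a b : ℝ}

lemma ofReal_rpow_mul_one_sub_rpow {x : ℝ} (hx : x ∈ Icc (0 : ℝ) 1) :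
    ((x ^ (a - 1) * (1 - x) ^ (b - 1) : ℝ) : ℂ)
      = (x : ℂ) ^ ((a : ℂ) - 1) * (1 - (x : ℂ)) ^ ((b : ℂ) - 1) := by
  rw [Complex.ofReal_mul, Complex.ofReal_cpow hx.1, Complex.ofReal_cpow (sub_nonneg.2 hx.2)]
  push_cast
  rfl

lemma integrableOn_rpow_mul_one_sub_rpow (ha : 0 < a) (hb : 0 < b) :
    IntegrableOn (fun x : ℝ => x ^ (a - 1) * (1 - x) ^ (b - 1)) (Ioo 0 1) := by
  have hC : IntegrableOn (fun x : ℝ => (x : ℂ) ^ ((a : ℂ) - 1) * (1 - (x : ℂ)) ^ ((b : ℂ) - 1))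
      (Ioo 0 1) :=
    ((intervalIntegrable_iff_integrableOn_Ioc_of_le zero_le_one).mp
      (Complex.betaIntegral_convergent (by simpa) (by simpa))).mono_set Ioo_subset_Ioc_self
  exact (hC.congr_fun (fun x hx => (ofReal_rpow_mul_one_sub_rpow
    (Ioo_subset_Icc_self hx)).symm) measurableSet_Ioo).re

lemma integral_rpow_mul_one_sub_rpow (ha : 0 < a) (hb : 0 < b) :
    ∫ x in Ioo (0 : ℝ) 1, x ^ (a - 1) * (1 - x) ^ (b - 1)
      = Real.Gamma a * Real.Gamma b / Real.Gamma (a + b) := by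
  have hbeta : Complex.betaIntegral a b
      = ((∫ x in Ioo (0 : ℝ) 1, x ^ (a - 1) * (1 - x) ^ (b - 1) : ℝ) : ℂ) := by
    rw [Complex.betaIntegral, intervalIntegral.integral_of_le zero_le_one,
      integral_Ioc_eq_integral_Ioo]
    refine (setIntegral_congr_fun measurableSet_Ioo fun x hx => ?_).trans integral_ofReal
    exact (ofReal_rpow_mul_one_sub_rpow (Ioo_subset_Icc_self hx)).symm
  have key := Complex.Gamma_mul_Gamma_eq_betaIntegral (s := a) (t := b) (by simpa) (by simpa)
  rw [hbeta, ← Complex.ofReal_add, Complex.Gamma_ofReal, Complex.Gamma_ofReal,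
    Complex.Gamma_ofReal, ← Complex.ofReal_mul, ← Complex.ofReal_mul] at key
  rw [Complex.ofReal_injective key,
    mul_div_cancel_left₀ _ (Real.Gamma_pos_of_pos (add_pos ha hb)).ne']

lemma integral_rpow_mul_one_sub_rpow_mul_pow (ha : 0 < a) (hb : 0 < b) (n : ℕ) :
    ∫ x in Ioo (0 : ℝ) 1, x ^ (a - 1) * (1 - x) ^ (b - 1) * x ^ n
      = Real.Gamma a * Real.Gamma b / Real.Gamma (a + b) * (poch a n / poch (a + b) n) := by
  have hshift : ∀ x ∈ Ioo (0 : ℝ) 1,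
      x ^ (a - 1) * (1 - x) ^ (b - 1) * x ^ n = x ^ (a + n - 1) * (1 - x) ^ (b - 1) := by
    intro x hx
    rw [add_sub_right_comm, Real.rpow_add_natCast hx.1.ne']
    ring
  rw [setIntegral_congr_fun measurableSet_Ioo hshift,
    integral_rpow_mul_one_sub_rpow (by positivity) hb, add_right_comm,
    Real.Gamma_add_nat_eq_poch_mul ha, Real.Gamma_add_nat_eq_poch_mul (by linarith)]
  have := poch_pos (add_pos ha hb) n
  have := Real.Gamma_pos_of_pos (add_pos ha hb)
  field_simp

end Beta

theorem integral_mul_exp_eq_tsum {α : Type*} [MeasurableSpace α] {ρ : Measure α} {f g : α → ℝ}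
    {C : ℝ} (hf : Integrable f ρ) (hg : AEStronglyMeasurable g ρ) (hgC : ∀ᵐ x ∂ρ, |g x| ≤ C) :
    ∫ x, f x * Real.exp (g x) ∂ρ = ∑' n : ℕ, (∫ x, f x * g x ^ n ∂ρ) / n ! := by
  set F : ℕ → α → ℝ := fun n x => f x * g x ^ n / (n ! : ℝ)
  have hF_le : ∀ n, ∀ᵐ x ∂ρ, ‖F n x‖ ≤ ‖f x‖ * (C ^ n / n !) := fun n => by
    filter_upwards [hgC] with x hx
    rw [norm_div, norm_mul, norm_pow, Real.norm_natCast, mul_div_assoc]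
    gcongr
    exact hx
  have hF_int : ∀ n, Integrable (F n) ρ := fun n =>
    (hf.norm.mul_const _).mono' (by fun_prop) (hF_le n)
  have hF_sum : Summable fun n => ∫ x, ‖F n x‖ ∂ρ := by
    refine .of_nonneg_of_le (fun n => integral_nonneg fun x => norm_nonneg _) (fun n => ?_)
      ((Real.summable_pow_div_factorial C).mul_left (∫ x, ‖f x‖ ∂ρ))
    rw [← integral_mul_const]
    exact integral_mono_ae (hF_int n).norm (hf.norm.mul_const _) (hF_le n)
  have hexp : ∀ x, f x * Real.exp (g x) = ∑' n, F n x := fun x => by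
    rw [Real.exp_eq_exp_ℝ, NormedSpace.exp_eq_tsum_div, ← tsum_mul_left]
    simp only [F, mul_div_assoc]
  simp_rw [hexp, ← integral_div]
  exact (integral_tsum_of_summable_integral_norm hF_int hF_sum).symm

/-- For `μ > 0` and `ν > μ`:
`∫₀¹ x^{ν−μ−1}(1−x)^{μ−1} e^{−zx³} dx
  = (Γ(μ)Γ(ν−μ)/Γ(ν)) ₃F₃((ν−μ)/3,(ν−μ+1)/3,(ν−μ+2)/3;ν/3,(ν+1)/3,(ν+2)/3;−z)`. -/
theorem integral_beta_exp_cube (μ ν z : ℝ) (hμ : 0 < μ) (hν : μ < ν) :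
    ∫ x in Ioo (0:ℝ) 1, x ^ (ν - μ - 1) * (1 - x) ^ (μ - 1) * Real.exp (-(z * x ^ 3))
      = Real.Gamma μ * Real.Gamma (ν - μ) / Real.Gamma ν *
          hyp3F3 ((ν - μ) / 3) ((ν - μ + 1) / 3) ((ν - μ + 2) / 3)
            (ν / 3) ((ν + 1) / 3) ((ν + 2) / 3) (-z) := by
  have hνμ : 0 < ν - μ := sub_pos.2 hν
  have hν0 : 0 < ν := hμ.trans hν
  have hbound : ∀ᵐ x ∂(volume.restrict (Ioo (0 : ℝ) 1)), |-(z * x ^ 3)| ≤ |z| :=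
    ae_restrict_of_forall_mem measurableSet_Ioo fun x hx => by
      rw [abs_neg, abs_mul]
      exact mul_le_of_le_one_right (abs_nonneg z)
        (by rw [abs_of_pos (pow_pos hx.1 3)]; exact pow_le_one₀ hx.1.le hx.2.le)
  have hmoment : ∀ n : ℕ,
      ∫ x in Ioo (0 : ℝ) 1, x ^ (ν - μ - 1) * (1 - x) ^ (μ - 1) * (-(z * x ^ 3)) ^ n
        = (-z) ^ n * (Real.Gamma (ν - μ) * Real.Gamma μ / Real.Gamma ν
            * (poch (ν - μ) (3 * n) / poch ν (3 * n))) := fun n => by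
    have hpow : ∀ x : ℝ, x ^ (ν - μ - 1) * (1 - x) ^ (μ - 1) * (-(z * x ^ 3)) ^ n
        = (-z) ^ n * (x ^ (ν - μ - 1) * (1 - x) ^ (μ - 1) * x ^ (3 * n)) := fun x => by ring
    rw [funext hpow, integral_const_mul, integral_rpow_mul_one_sub_rpow_mul_pow hνμ hμ,
      sub_add_cancel]
  rw [integral_mul_exp_eq_tsum (integrableOn_rpow_mul_one_sub_rpow hνμ hμ) (by fun_prop) hbound,
    hyp3F3, ← tsum_mul_left]
  refine tsum_congr fun n => ?_
  rw [hmoment, poch_three_mul, poch_three_mul]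
  have := poch_pos (c := ν / 3) (by positivity) n
  have := poch_pos (c := (ν + 1) / 3) (by positivity) n
  have := poch_pos (c := (ν + 2) / 3) (by positivity) n
  have := Real.Gamma_pos_of_pos hν0
  field_simp
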